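/- Let u, φ, h_S, Ψ_S : ℝ² → ℝ be smooth functions of (ξ, z) with ξ > 0 satisfying: (i) ∂²_ξ φ + (1/ξ)∂_ξ φ - ∂²_z φ = 0; (ii) ∂²_ξ u + (1/ξ)∂_ξ u - ∂²_z u = e^{-2u}((∂_z Ψ_S)² - (∂_ξ Ψ_S)²); (iii) ∂_ξ(ξ e^{-2u} ∂_ξ Ψ_S) - ∂_z(ξ e^{-2u} ∂_z Ψ_S) = 0; (iv) (1/ξ)∂_ξ h_S = (∂_ξφ)² + (∂_zφ)² + (∂_ξ u)² + (∂_z u)² + e^{-2u}((∂_ξΨ_S)² + (∂_zΨ_S)²); (v) (1/ξ)∂_z h_S = 2∂_ξφ∂_zφ + 2∂_ξ u ∂_z u + 2 e^{-2u}∂_ξΨ_S ∂_zΨ_S. Then p = (u+φ)/2, φ̃ = (φ-u)/2, h = h_S/2, Ψ_m = Ψ_S/√2, Ψ_e = 0 satisfy the reduced Einstein-Maxwell-dilaton equations: ∂²_ξ p + (1/ξ)∂_ξ p - ∂²_z p = e^{2φ̃ - 2p}((∂_zΨ_m)² - (∂_ξΨ_m)²); ∂²_ξ φ̃ + (1/ξ)∂_ξ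 φ̃ - ∂²_z φ̃ = -e^{2φ̃ - 2p}((∂_zΨ_m)² - (∂_ξΨ_m)²); ∂_ξ(ξ e^{2φ̃ - 2p}∂_ξΨ_m) - ∂_z(ξ e^{2φ̃ - 2p}∂_zΨ_m) = 0; (1/ξ)∂_ξ h = (∂_ξφ̃)² + (∂_zφ̃)² + (∂_ξp)² + (∂_zp)² + e^{2φ̃-2p}((∂_ξΨ_m)² + (∂_zΨ_m)²); (1/ξ)∂_z h = 2∂_ξφ̃∂_zφ̃ + 2∂_ξp∂_zp + 2e^{2φ̃-2p}∂_ξΨ_m∂_zΨ_m. -/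

import Mathlib

/-- Partial derivative with respect to the first variable ξ. -/
noncomputable def pdXi (f : ℝ → ℝ → ℝ) : ℝ → ℝ → ℝ :=
  fun ξ z => deriv (fun t => f t z) ξ

/-- Partial derivative with respect to the second variable z. -/
noncomputable def pdZ (f : ℝ → ℝ → ℝ) : ℝ → ℝ → ℝ :=
  fun ξ z => deriv (fun t => f ξ t) z

lemma smooth_partials (f : ℝ → ℝ → ℝ) (hf : ContDiff ℝ (⊤ : ℕ∞) (fun q : ℝ × ℝ => f q.1 q.2)) :
    (∀ z, Differentiable ℝ (fun t => f t z)) ∧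
    (∀ ξ, Differentiable ℝ (fun t => f ξ t)) ∧
    (∀ z, Differentiable ℝ (fun t => pdXi f t z)) ∧
    (∀ ξ, Differentiable ℝ (fun t => pdZ f ξ t)) := by
  have hFd : Differentiable ℝ (fun q : ℝ × ℝ => f q.1 q.2) := hf.differentiable (by simp)
  have hX : ∀ ξ z, pdXi f ξ z = fderiv ℝ (fun q : ℝ × ℝ => f q.1 q.2) (ξ, z) (1, 0) := by
    intro ξ z
    have h2 := (hFd (ξ, z)).hasFDerivAt.comp_hasDerivAt ξ
      ((hasDerivAt_id ξ).prodMk (hasDerivAt_const ξ z))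
    exact h2.deriv
  have hZ : ∀ ξ z, pdZ f ξ z = fderiv ℝ (fun q : ℝ × ℝ => f q.1 q.2) (ξ, z) (0, 1) := by
    intro ξ z
    have h2 := (hFd (ξ, z)).hasFDerivAt.comp_hasDerivAt z
      ((hasDerivAt_const z ξ).prodMk (hasDerivAt_id z))
    exact h2.deriv
  have hG : ContDiff ℝ (⊤ : ℕ∞) (fun q : ℝ × ℝ => fderiv ℝ (fun q : ℝ × ℝ => f q.1 q.2) q) :=
    hf.fderiv_right (by simp)
  have hGX : Differentiable ℝ (fun q : ℝ × ℝ => fderiv ℝ (fun q : ℝ × ℝ => f q.1 q.2) q (1, 0)) :=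
    (hG.clm_apply contDiff_const).differentiable (by simp)
  have hGZ : Differentiable ℝ (fun q : ℝ × ℝ => fderiv ℝ (fun q : ℝ × ℝ => f q.1 q.2) q (0, 1)) :=
    (hG.clm_apply contDiff_const).differentiable (by simp)
  refine ⟨fun z => ?_, fun ξ => ?_, fun z => ?_, fun ξ => ?_⟩
  · exact hFd.comp (differentiable_id.prodMk (differentiable_const z))
  · exact hFd.comp ((differentiable_const ξ).prodMk differentiable_id)
  · have : (fun t => pdXi f t z) = fun t => fderiv ℝ (fun q : ℝ × ℝ => f q.1 q.2) (t, z) (1, 0) :=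
      funext fun t => hX t z
    rw [this]
    exact hGX.comp (differentiable_id.prodMk (differentiable_const z))
  · have : (fun t => pdZ f ξ t) = fun t => fderiv ℝ (fun q : ℝ × ℝ => f q.1 q.2) (ξ, t) (0, 1) :=
      funext fun t => hZ ξ t
    rw [this]
    exact hGZ.comp ((differentiable_const ξ).prodMk differentiable_id)

theorem emd_from_minimally_coupled
    (u φ hS ΨS : ℝ → ℝ → ℝ)
    (hu : ContDiff ℝ (⊤ : ℕ∞) (fun q : ℝ × ℝ => u q.1 q.2))
    (hφ : ContDiff ℝ (⊤ : ℕ∞) (fun q : ℝ × ℝ => φ q.1 q.2))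
    (hhS : ContDiff ℝ (⊤ : ℕ∞) (fun q : ℝ × ℝ => hS q.1 q.2))
    (hΨS : ContDiff ℝ (⊤ : ℕ∞) (fun q : ℝ × ℝ => ΨS q.1 q.2))
    (eq1 : ∀ ξ z, 0 < ξ →
      pdXi (pdXi φ) ξ z + (1/ξ) * pdXi φ ξ z - pdZ (pdZ φ) ξ z = 0)
    (eq2 : ∀ ξ z, 0 < ξ →
      pdXi (pdXi u) ξ z + (1/ξ) * pdXi u ξ z - pdZ (pdZ u) ξ z
        = Real.exp (-2 * u ξ z) * ((pdZ ΨS ξ z)^2 - (pdXi ΨS ξ z)^2))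
    (eq3 : ∀ ξ z, 0 < ξ →
      pdXi (fun ξ' z' => ξ' * Real.exp (-2 * u ξ' z') * pdXi ΨS ξ' z') ξ z
        - pdZ (fun ξ' z' => ξ' * Real.exp (-2 * u ξ' z') * pdZ ΨS ξ' z') ξ z = 0)
    (eq4 : ∀ ξ z, 0 < ξ →
      (1/ξ) * pdXi hS ξ z
        = (pdXi φ ξ z)^2 + (pdZ φ ξ z)^2 + (pdXi u ξ z)^2 + (pdZ u ξ z)^2
          + Real.exp (-2 * u ξ z) * ((pdXi ΨS ξ z)^2 + (pdZ ΨS ξ z)^2))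
    (eq5 : ∀ ξ z, 0 < ξ →
      (1/ξ) * pdZ hS ξ z
        = 2 * pdXi φ ξ z * pdZ φ ξ z + 2 * pdXi u ξ z * pdZ u ξ z
          + 2 * Real.exp (-2 * u ξ z) * pdXi ΨS ξ z * pdZ ΨS ξ z)
    (p φd h Ψm : ℝ → ℝ → ℝ)
    (hp : ∀ ξ z, p ξ z = (u ξ z + φ ξ z)/2)
    (hφd : ∀ ξ z, φd ξ z = (φ ξ z - u ξ z)/2)
    (hh : ∀ ξ z, h ξ z = hS ξ z / 2)
    (hΨm : ∀ ξ z, Ψm ξ z = ΨS ξ z / Real.sqrt 2) :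
    (∀ ξ z, 0 < ξ →
      pdXi (pdXi p) ξ z + (1/ξ) * pdXi p ξ z - pdZ (pdZ p) ξ z
        = Real.exp (2 * φd ξ z - 2 * p ξ z) * ((pdZ Ψm ξ z)^2 - (pdXi Ψm ξ z)^2)) ∧
    (∀ ξ z, 0 < ξ →
      pdXi (pdXi φd) ξ z + (1/ξ) * pdXi φd ξ z - pdZ (pdZ φd) ξ z
        = -(Real.exp (2 * φd ξ z - 2 * p ξ z) * ((pdZ Ψm ξ z)^2 - (pdXi Ψm ξ z)^2))) ∧
    (∀ ξ z, 0 < ξ →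
      pdXi (fun ξ' z' => ξ' * Real.exp (2 * φd ξ' z' - 2 * p ξ' z') * pdXi Ψm ξ' z') ξ z
        - pdZ (fun ξ' z' => ξ' * Real.exp (2 * φd ξ' z' - 2 * p ξ' z') * pdZ Ψm ξ' z') ξ z = 0) ∧
    (∀ ξ z, 0 < ξ →
      (1/ξ) * pdXi h ξ z
        = (pdXi φd ξ z)^2 + (pdZ φd ξ z)^2 + (pdXi p ξ z)^2 + (pdZ p ξ z)^2
          + Real.exp (2 * φd ξ z - 2 * p ξ z) * ((pdXi Ψm ξ z)^2 + (pdZ Ψm ξ z)^2)) ∧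
    (∀ ξ z, 0 < ξ →
      (1/ξ) * pdZ h ξ z
        = 2 * pdXi φd ξ z * pdZ φd ξ z + 2 * pdXi p ξ z * pdZ p ξ z
          + 2 * Real.exp (2 * φd ξ z - 2 * p ξ z) * pdXi Ψm ξ z * pdZ Ψm ξ z) := by
  obtain ⟨uX, uZ, uXX, uZZ⟩ := smooth_partials u hu
  obtain ⟨fX, fZ, fXX, fZZ⟩ := smooth_partials φ hφ
  have hs2 : Real.sqrt 2 * Real.sqrt 2 = 2 := Real.mul_self_sqrt (by norm_num)
  -- first derivatives of p, φd, h, Ψm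
  have hpX : ∀ ξ z, pdXi p ξ z = (pdXi u ξ z + pdXi φ ξ z)/2 := by
    intro ξ z
    show deriv (fun t => p t z) ξ = _
    rw [show (fun t => p t z) = fun t => (u t z + φ t z)/2 from funext fun t => hp t z,
      deriv_div_const, deriv_fun_add (uX z ξ) (fX z ξ)]
    rfl
  have hpZ : ∀ ξ z, pdZ p ξ z = (pdZ u ξ z + pdZ φ ξ z)/2 := by
    intro ξ z
    show deriv (fun t => p ξ t) z = _
    rw [show (fun t => p ξ t) = fun t => (u ξ t + φ ξ t)/2 from funext fun t => hp ξ t,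
      deriv_div_const, deriv_fun_add (uZ ξ z) (fZ ξ z)]
    rfl
  have hdX : ∀ ξ z, pdXi φd ξ z = (pdXi φ ξ z - pdXi u ξ z)/2 := by
    intro ξ z
    show deriv (fun t => φd t z) ξ = _
    rw [show (fun t => φd t z) = fun t => (φ t z - u t z)/2 from funext fun t => hφd t z,
      deriv_div_const, deriv_fun_sub (fX z ξ) (uX z ξ)]
    rfl
  have hdZ : ∀ ξ z, pdZ φd ξ z = (pdZ φ ξ z - pdZ u ξ z)/2 := by
    intro ξ z
    show deriv (fun t => φd ξ t) z = _
    rw [show (fun t => φd ξ t) = fun t => (φ ξ t - u ξ t)/2 from funext fun t => hφd ξ t,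
      deriv_div_const, deriv_fun_sub (fZ ξ z) (uZ ξ z)]
    rfl
  have hhX : ∀ ξ z, pdXi h ξ z = pdXi hS ξ z / 2 := by
    intro ξ z
    show deriv (fun t => h t z) ξ = _
    rw [show (fun t => h t z) = fun t => hS t z / 2 from funext fun t => hh t z,
      deriv_div_const]
    rfl
  have hhZ : ∀ ξ z, pdZ h ξ z = pdZ hS ξ z / 2 := by
    intro ξ z
    show deriv (fun t => h ξ t) z = _
    rw [show (fun t => h ξ t) = fun t => hS ξ t / 2 from funext fun t => hh ξ t,
      deriv_div_const]
    rfl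
  have hmX : ∀ ξ z, pdXi Ψm ξ z = pdXi ΨS ξ z / Real.sqrt 2 := by
    intro ξ z
    show deriv (fun t => Ψm t z) ξ = _
    rw [show (fun t => Ψm t z) = fun t => ΨS t z / Real.sqrt 2 from funext fun t => hΨm t z,
      deriv_div_const]
    rfl
  have hmZ : ∀ ξ z, pdZ Ψm ξ z = pdZ ΨS ξ z / Real.sqrt 2 := by
    intro ξ z
    show deriv (fun t => Ψm ξ t) z = _
    rw [show (fun t => Ψm ξ t) = fun t => ΨS ξ t / Real.sqrt 2 from funext fun t => hΨm ξ t,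
      deriv_div_const]
    rfl
  -- second derivatives of p, φd
  have hpXX : ∀ ξ z, pdXi (pdXi p) ξ z = (pdXi (pdXi u) ξ z + pdXi (pdXi φ) ξ z)/2 := by
    intro ξ z
    show deriv (fun t => pdXi p t z) ξ = _
    rw [show (fun t => pdXi p t z) = fun t => (pdXi u t z + pdXi φ t z)/2 from
        funext fun t => hpX t z,
      deriv_div_const, deriv_fun_add (uXX z ξ) (fXX z ξ)]
    rfl
  have hpZZ : ∀ ξ z, pdZ (pdZ p) ξ z = (pdZ (pdZ u) ξ z + pdZ (pdZ φ) ξ z)/2 := by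
    intro ξ z
    show deriv (fun t => pdZ p ξ t) z = _
    rw [show (fun t => pdZ p ξ t) = fun t => (pdZ u ξ t + pdZ φ ξ t)/2 from
        funext fun t => hpZ ξ t,
      deriv_div_const, deriv_fun_add (uZZ ξ z) (fZZ ξ z)]
    rfl
  have hdXX : ∀ ξ z, pdXi (pdXi φd) ξ z = (pdXi (pdXi φ) ξ z - pdXi (pdXi u) ξ z)/2 := by
    intro ξ z
    show deriv (fun t => pdXi φd t z) ξ = _
    rw [show (fun t => pdXi φd t z) = fun t => (pdXi φ t z - pdXi u t z)/2 from
        funext fun t => hdX t z,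
      deriv_div_const, deriv_fun_sub (fXX z ξ) (uXX z ξ)]
    rfl
  have hdZZ : ∀ ξ z, pdZ (pdZ φd) ξ z = (pdZ (pdZ φ) ξ z - pdZ (pdZ u) ξ z)/2 := by
    intro ξ z
    show deriv (fun t => pdZ φd ξ t) z = _
    rw [show (fun t => pdZ φd ξ t) = fun t => (pdZ φ ξ t - pdZ u ξ t)/2 from
        funext fun t => hdZ ξ t,
      deriv_div_const, deriv_fun_sub (fZZ ξ z) (uZZ ξ z)]
    rfl
  -- exponent identity
  have hexp : ∀ a b, Real.exp (2 * φd a b - 2 * p a b) = Real.exp (-2 * u a b) := by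
    intro a b
    congr 1
    rw [hφd, hp]
    ring
  -- Maxwell potential identities
  have hsqX : ∀ a b, (pdXi Ψm a b)^2 = (pdXi ΨS a b)^2 / 2 := by
    intro a b
    rw [hmX, div_pow, sq (Real.sqrt 2), hs2]
  have hsqZ : ∀ a b, (pdZ Ψm a b)^2 = (pdZ ΨS a b)^2 / 2 := by
    intro a b
    rw [hmZ, div_pow, sq (Real.sqrt 2), hs2]
  have hcross : ∀ a b, pdXi Ψm a b * pdZ Ψm a b = pdXi ΨS a b * pdZ ΨS a b / 2 := by
    intro a b
    rw [hmX, hmZ, div_mul_div_comm, hs2]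
  refine ⟨?_, ?_, ?_, ?_, ?_⟩
  · intro ξ z hξ
    rw [hpXX, hpX, hpZZ, hexp]
    linear_combination (eq1 ξ z hξ)/2 + (eq2 ξ z hξ)/2
      - Real.exp (-2 * u ξ z) * (hsqZ ξ z) + Real.exp (-2 * u ξ z) * (hsqX ξ z)
  · intro ξ z hξ
    rw [hdXX, hdX, hdZZ, hexp]
    linear_combination (eq1 ξ z hξ)/2 - (eq2 ξ z hξ)/2
      + Real.exp (-2 * u ξ z) * (hsqZ ξ z) - Real.exp (-2 * u ξ z) * (hsqX ξ z)
  · intro ξ z hξ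
    have hfun1 : (fun ξ' z' => ξ' * Real.exp (2 * φd ξ' z' - 2 * p ξ' z') * pdXi Ψm ξ' z')
        = fun ξ' z' => (ξ' * Real.exp (-2 * u ξ' z') * pdXi ΨS ξ' z') / Real.sqrt 2 := by
      funext a b
      rw [hexp a b, hmX a b]
      ring
    have hfun2 : (fun ξ' z' => ξ' * Real.exp (2 * φd ξ' z' - 2 * p ξ' z') * pdZ Ψm ξ' z')
        = fun ξ' z' => (ξ' * Real.exp (-2 * u ξ' z') * pdZ ΨS ξ' z') / Real.sqrt 2 := by
      funext a b
      rw [hexp a b, hmZ a b]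
      ring
    rw [hfun1, hfun2]
    have e3 : deriv (fun t => t * Real.exp (-2 * u t z) * pdXi ΨS t z) ξ
        - deriv (fun t => ξ * Real.exp (-2 * u ξ t) * pdZ ΨS ξ t) z = 0 := eq3 ξ z hξ
    show deriv (fun t => (t * Real.exp (-2 * u t z) * pdXi ΨS t z) / Real.sqrt 2) ξ
        - deriv (fun t => (ξ * Real.exp (-2 * u ξ t) * pdZ ΨS ξ t) / Real.sqrt 2) z = 0
    rw [deriv_div_const, deriv_div_const]
    linear_combination e3 / Real.sqrt 2
  · intro ξ z hξ
    rw [hhX, hdX, hdZ, hpX, hpZ, hexp]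
    linear_combination (eq4 ξ z hξ)/2
      - Real.exp (-2 * u ξ z) * (hsqX ξ z) - Real.exp (-2 * u ξ z) * (hsqZ ξ z)
  · intro ξ z hξ
    rw [hhZ, hdX, hdZ, hpX, hpZ, hexp]
    linear_combination (eq5 ξ z hξ)/2 - 2 * Real.exp (-2 * u ξ z) * (hcross ξ z)
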